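/- arXiv:2103.04985 — 4 statements merged into one kernel-verified Lean document; each statement's English description precedes it below -/
import Mathlib

section
/- Consider classification with Y ∈ {1,...,K} and the cross-entropy loss l(f(X), Y) = -1_Y^T log(f(X)), where f(X) is a probability vector. Let f*_k(x) = P(Y=k | X=x) and g*_k(z) = P(Y=k | Z=z) be the population minimizers. Then R(f*) - R_S(g*) = 0 if and only if for every k, P(Y=k | X_S, X_{S^c}) = P(Y=k | X_{S^c}) almost surely; that is, risk invariance under the cross-entropy loss is equivalent to conditional independence of Y and X_S given X_{S^c} almost surely. -/
/-!
Write `p = P(Y = · | X)` and `q = P(Y = · | Z)`. As `σ(Z) ⊆ σ(X)`, both `log p_k` and `log q_k`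
are `σ(X)`-measurable, so pulling them out of `E[· | X]` turns the risk gap
`E[-log p_Y] - E[-log q_Y]` into `-E[KL(p, q)]`; the same inclusion gives `q_k = 0 → p_k = 0`
almost surely. Gibbs' inequality then makes `KL(p, q)` nonnegative, vanishing exactly when
`p = q`, so the gap is zero iff `p = q` almost surely.
-/

open MeasureTheory ProbabilityTheory Filter Real InformationTheory

lemma mul_klFun_div (a : ℝ) {b : ℝ} (hb : 0 < b) :
    b * klFun (a / b) = a * (log a - log b) + b - a := by
  rcases eq_or_ne a 0 with rfl | ha
  · simp [klFun_zero]
  · rw [klFun_apply, log_div ha hb.ne']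
    field_simp

lemma mul_log_sub_log_add_sub_nonneg {a b : ℝ} (ha : 0 ≤ a) (hb : 0 ≤ b) (hab : b = 0 → a = 0) :
    0 ≤ a * (log a - log b) + b - a := by
  rcases hb.eq_or_lt with rfl | hb
  · simp [hab rfl]
  · rw [← mul_klFun_div a hb]
    exact mul_nonneg hb.le (klFun_nonneg (div_nonneg ha hb.le))

lemma mul_log_sub_log_add_sub_eq_zero_iff {a b : ℝ} (ha : 0 ≤ a) (hb : 0 ≤ b)
    (hab : b = 0 → a = 0) : a * (log a - log b) + b - a = 0 ↔ a = b := by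
  rcases hb.eq_or_lt with rfl | hb
  · simp [hab rfl]
  · rw [← mul_klFun_div a hb, mul_eq_zero_iff_left hb.ne', klFun_eq_zero_iff (div_nonneg ha hb.le),
      div_eq_one_iff_eq hb.ne']

noncomputable def discreteKL {ι : Type*} [Fintype ι] (p q : ι → ℝ) : ℝ :=
  ∑ k, p k * (log (p k) - log (q k))

section discreteKL

variable {ι : Type*} [Fintype ι] {p q : ι → ℝ}

lemma discreteKL_eq_sum_add_sub (hp : p ∈ stdSimplex ℝ ι) (hq : q ∈ stdSimplex ℝ ι) :
    discreteKL p q = ∑ k, (p k * (log (p k) - log (q k)) + q k - p k) := by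
  simp only [discreteKL, Finset.sum_sub_distrib, Finset.sum_add_distrib, hp.2, hq.2,
    add_sub_cancel_right]

lemma discreteKL_nonneg (hp : p ∈ stdSimplex ℝ ι) (hq : q ∈ stdSimplex ℝ ι)
    (hpq : ∀ k, q k = 0 → p k = 0) : 0 ≤ discreteKL p q := by
  rw [discreteKL_eq_sum_add_sub hp hq]
  exact Finset.sum_nonneg fun k _ => mul_log_sub_log_add_sub_nonneg (hp.1 k) (hq.1 k) (hpq k)

lemma discreteKL_eq_zero_iff (hp : p ∈ stdSimplex ℝ ι) (hq : q ∈ stdSimplex ℝ ι)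
    (hpq : ∀ k, q k = 0 → p k = 0) : discreteKL p q = 0 ↔ p = q := by
  rw [discreteKL_eq_sum_add_sub hp hq, Finset.sum_eq_zero_iff_of_nonneg fun k _ =>
    mul_log_sub_log_add_sub_nonneg (hp.1 k) (hq.1 k) (hpq k), funext_iff]
  simp only [Finset.mem_univ, true_implies]
  exact forall_congr' fun k => mul_log_sub_log_add_sub_eq_zero_iff (hp.1 k) (hq.1 k) (hpq k)

end discreteKL

section condProb

variable {Ω ι : Type*} {m m₁ m₂ mΩ : MeasurableSpace Ω} {μ : Measure Ω} [IsFiniteMeasure μ]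
  [MeasurableSpace ι] [MeasurableSingletonClass ι] [DecidableEq ι] {Y : Ω → ι}

lemma integrable_ite_eq_one_zero (hY : Measurable Y) (k : ι) :
    Integrable (fun ω => if Y ω = k then (1 : ℝ) else 0) μ :=
  (integrable_const (1 : ℝ)).indicator (hY (measurableSet_singleton k)) |>.congr <|
    ae_of_all _ fun ω => by by_cases h : Y ω = k <;> simp [h]

lemma ae_condExp_eq_zero_of_le (h₁₂ : m₁ ≤ m₂) (h₂ : m₂ ≤ mΩ)
    {f : Ω → ℝ} (hf0 : 0 ≤ᵐ[μ] f) (hf : Integrable f μ) :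
    ∀ᵐ ω ∂μ, μ[f|m₁] ω = 0 → μ[f|m₂] ω = 0 := by
  set s := {ω | μ[f|m₁] ω = 0}
  have hs : MeasurableSet[m₁] s := stronglyMeasurable_condExp.measurable (measurableSet_singleton 0)
  have hint : ∫ ω in s, μ[f|m₂] ω ∂μ = 0 := calc
    ∫ ω in s, μ[f|m₂] ω ∂μ = ∫ ω in s, μ[f|m₁] ω ∂μ := by
      rw [setIntegral_condExp h₂ hf (h₁₂ _ hs), setIntegral_condExp (h₁₂.trans h₂) hf hs]
    _ = 0 := setIntegral_eq_zero_of_forall_eq_zero fun ω hω => hω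
  have hzero := (setIntegral_eq_zero_iff_of_nonneg_ae (ae_restrict_of_ae (condExp_nonneg hf0))
    integrable_condExp.integrableOn).1 hint
  exact (ae_restrict_iff' (h₁₂.trans h₂ _ hs)).1 hzero

lemma integral_mul_condExp (hm : m ≤ mΩ) {f h : Ω → ℝ} (hh : AEStronglyMeasurable[m] h μ)
    (hf : Integrable f μ) (hhf : Integrable (h * f) μ) :
    Integrable (h * μ[f|m]) μ ∧ ∫ ω, h ω * μ[f|m] ω ∂μ = ∫ ω, h ω * f ω ∂μ := by
  have hpull := condExp_mul_of_aestronglyMeasurable_left hh hhf hf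
  refine ⟨integrable_condExp.congr hpull, ?_⟩
  calc ∫ ω, h ω * μ[f|m] ω ∂μ = ∫ ω, μ[h * f|m] ω ∂μ := (integral_congr_ae hpull).symm
    _ = ∫ ω, h ω * f ω ∂μ := integral_condExp hm

variable [Fintype ι] {p : ι → Ω → ℝ}

lemma ae_mem_stdSimplex (hm : m ≤ mΩ) (hY : Measurable Y)
    (hp : ∀ k, p k =ᵐ[μ] μ[fun ω => if Y ω = k then (1 : ℝ) else 0|m]) :
    ∀ᵐ ω ∂μ, (fun k => p k ω) ∈ stdSimplex ℝ ι := by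
  have hnonneg : ∀ k, 0 ≤ᵐ[μ] p k := fun k =>
    (condExp_nonneg (ae_of_all _ fun ω => by split_ifs <;> norm_num)).trans_eq (hp k).symm
  have hsum : ∑ k, p k =ᵐ[μ] fun _ => (1 : ℝ) := calc
    ∑ k, p k =ᵐ[μ] ∑ k, μ[fun ω => if Y ω = k then (1 : ℝ) else 0|m] :=
      eventuallyEq_sum fun k _ => hp k
    _ =ᵐ[μ] μ[∑ k, fun ω => if Y ω = k then (1 : ℝ) else 0|m] :=
      (condExp_finsetSum (fun k _ => integrable_ite_eq_one_zero hY k) m).symm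
    _ = μ[fun _ => (1 : ℝ)|m] := by
      congr 1
      ext ω
      simp
    _ = fun _ => 1 := condExp_const hm 1
  filter_upwards [ae_all_iff.2 hnonneg, hsum] with ω hω hω'
  exact ⟨hω, by simpa using hω'⟩

lemma integral_comp_eq_integral_sum_mul (hm : m ≤ mΩ) (hY : Measurable Y)
    (hp : ∀ k, p k =ᵐ[μ] μ[fun ω => if Y ω = k then (1 : ℝ) else 0|m]) {h : ι → Ω → ℝ}
    (hh : ∀ k, AEStronglyMeasurable[m] (h k) μ) (hhY : Integrable (fun ω => h (Y ω) ω) μ) :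
    Integrable (fun ω => ∑ k, h k ω * p k ω) μ ∧
      ∫ ω, h (Y ω) ω ∂μ = ∫ ω, ∑ k, h k ω * p k ω ∂μ := by
  set I : ι → Ω → ℝ := fun k ω => if Y ω = k then 1 else 0
  have hsplit : ∀ ω, h (Y ω) ω = ∑ k, h k ω * I k ω := fun ω => by simp [I]
  have hhI : ∀ k, Integrable (h k * I k) μ := fun k =>
    hhY.mono (((hh k).mono hm).mul (integrable_ite_eq_one_zero hY k).aestronglyMeasurable)
      (ae_of_all _ fun ω => by by_cases hk : Y ω = k <;> simp [I, hk])
  have hpull := fun k => integral_mul_condExp hm (hh k) (integrable_ite_eq_one_zero hY k) (hhI k)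
  have hversion : ∀ k, h k * μ[I k|m] =ᵐ[μ] h k * p k := fun k =>
    EventuallyEq.rfl.mul (hp k).symm
  have hint : ∀ k, Integrable (h k * p k) μ := fun k => (hpull k).1.congr (hversion k)
  refine ⟨integrable_finsetSum _ fun k _ => hint k, ?_⟩
  calc ∫ ω, h (Y ω) ω ∂μ = ∫ ω, ∑ k, h k ω * I k ω ∂μ := by simp_rw [← hsplit]
    _ = ∑ k, ∫ ω, h k ω * I k ω ∂μ := integral_finsetSum _ fun k _ => hhI k
    _ = ∑ k, ∫ ω, h k ω * p k ω ∂μ := Finset.sum_congr rfl fun k _ =>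
      (hpull k).2.symm.trans (integral_congr_ae (hversion k))
    _ = ∫ ω, ∑ k, h k ω * p k ω ∂μ := (integral_finsetSum _ fun k _ => hint k).symm

variable {q : ι → Ω → ℝ}

lemma integral_neg_log_sub_eq_neg_integral_discreteKL (h₁₂ : m₁ ≤ m₂) (h₂ : m₂ ≤ mΩ)
    (hY : Measurable Y)
    (hp : ∀ k, p k =ᵐ[μ] μ[fun ω => if Y ω = k then (1 : ℝ) else 0|m₂])
    (hq : ∀ k, q k =ᵐ[μ] μ[fun ω => if Y ω = k then (1 : ℝ) else 0|m₁])
    (hpY : Integrable (fun ω => -log (p (Y ω) ω)) μ)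
    (hqY : Integrable (fun ω => -log (q (Y ω) ω)) μ) :
    Integrable (fun ω => discreteKL (fun k => p k ω) (fun k => q k ω)) μ ∧
      (∫ ω, -log (p (Y ω) ω) ∂μ) - (∫ ω, -log (q (Y ω) ω) ∂μ) =
        -∫ ω, discreteKL (fun k => p k ω) (fun k => q k ω) ∂μ := by
  have hneg_log {m : MeasurableSpace Ω} {r : Ω → ℝ} {f : Ω → ℝ} (hr : r =ᵐ[μ] μ[f|m]) :
      AEStronglyMeasurable[m] (fun ω => -log (r ω)) μ :=
    ⟨fun ω => -log (μ[f|m] ω), (measurable_log.comp stronglyMeasurable_condExp.measurable).neg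
      |>.stronglyMeasurable, hr.fun_comp fun x => -log x⟩
  obtain ⟨hintp, hp_eq⟩ := integral_comp_eq_integral_sum_mul (h := fun k ω => -log (p k ω))
    h₂ hY hp (fun k => hneg_log (hp k)) hpY
  obtain ⟨hintq, hq_eq⟩ := integral_comp_eq_integral_sum_mul (h := fun k ω => -log (q k ω))
    h₂ hY hp (fun k => (hneg_log (hq k)).mono h₁₂) hqY
  have hpointwise : ∀ ω, ∑ k, -log (q k ω) * p k ω - ∑ k, -log (p k ω) * p k ω =
      discreteKL (fun k => p k ω) (fun k => q k ω) := fun ω => by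
    rw [discreteKL, ← Finset.sum_sub_distrib]
    exact Finset.sum_congr rfl fun k _ => by ring
  refine ⟨(hintq.sub hintp).congr (ae_of_all _ hpointwise), ?_⟩
  rw [hp_eq, hq_eq, ← integral_sub hintp hintq, ← integral_neg]
  exact integral_congr_ae (ae_of_all _ fun ω => by simp only [← hpointwise]; ring)

theorem integral_neg_log_sub_eq_zero_iff (h₁₂ : m₁ ≤ m₂) (h₂ : m₂ ≤ mΩ) (hY : Measurable Y)
    (hp : ∀ k, p k =ᵐ[μ] μ[fun ω => if Y ω = k then (1 : ℝ) else 0|m₂])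
    (hq : ∀ k, q k =ᵐ[μ] μ[fun ω => if Y ω = k then (1 : ℝ) else 0|m₁])
    (hpY : Integrable (fun ω => -log (p (Y ω) ω)) μ)
    (hqY : Integrable (fun ω => -log (q (Y ω) ω)) μ) :
    (∫ ω, -log (p (Y ω) ω) ∂μ) - (∫ ω, -log (q (Y ω) ω) ∂μ) = 0 ↔ ∀ k, p k =ᵐ[μ] q k := by
  obtain ⟨hint, hdiff⟩ := integral_neg_log_sub_eq_neg_integral_discreteKL h₁₂ h₂ hY hp hq hpY hqY
  have hp_simplex := ae_mem_stdSimplex h₂ hY hp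
  have hq_simplex := ae_mem_stdSimplex (h₁₂.trans h₂) hY hq
  have hpq : ∀ᵐ ω ∂μ, ∀ k, q k ω = 0 → p k ω = 0 := ae_all_iff.2 fun k => by
    filter_upwards [hp k, hq k, ae_condExp_eq_zero_of_le h₁₂ h₂
      (ae_of_all _ fun ω => by split_ifs <;> norm_num) (integrable_ite_eq_one_zero hY k)]
      with ω hpω hqω hzero
    rw [hpω, hqω]
    exact hzero
  have hKL_nonneg : 0 ≤ᵐ[μ] fun ω => discreteKL (fun k => p k ω) (fun k => q k ω) := by
    filter_upwards [hp_simplex, hq_simplex, hpq] with ω hpω hqω hpqω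
    exact discreteKL_nonneg hpω hqω hpqω
  rw [hdiff, neg_eq_zero, integral_eq_zero_iff_of_nonneg_ae hKL_nonneg hint]
  simp only [EventuallyEq, ← ae_all_iff]
  refine eventually_congr ?_
  filter_upwards [hp_simplex, hq_simplex, hpq] with ω hpω hqω hpqω
  rw [Pi.zero_apply, discreteKL_eq_zero_iff hpω hqω hpqω, funext_iff]

end condProb

theorem crossEntropy_risk_invariance_iff_cond_indep_general
    {Ω : Type*} [MeasurableSpace Ω]
    {d K : ℕ} (μ : Measure Ω) [IsProbabilityMeasure μ]
    (X : Ω → Fin d → ℝ) (Y : Ω → Fin K) (S : Finset (Fin d))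
    (Z : Ω → Fin d → ℝ)
    (hZ : ∀ ω i, Z ω i = if i ∈ S then 0 else X ω i)
    (hX : Measurable X) (hY : Measurable Y)
    (fstar gstar : (Fin d → ℝ) → Fin K → ℝ)
    -- `fstar k (X ω)` is a version of `P(Y = k | X)`
    (hfstar : ∀ k : Fin K, (fun ω => fstar (X ω) k)
      =ᵐ[μ] μ[(fun ω => if Y ω = k then (1 : ℝ) else 0) |
        MeasurableSpace.comap X MeasurableSpace.pi])
    -- `gstar k (Z ω)` is a version of `P(Y = k | Z)`
    (hgstar : ∀ k : Fin K, (fun ω => gstar (Z ω) k)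
      =ᵐ[μ] μ[(fun ω => if Y ω = k then (1 : ℝ) else 0) |
        MeasurableSpace.comap Z MeasurableSpace.pi])
    -- integrability of the two cross-entropy losses
    (hInt₁ : Integrable (fun ω => -Real.log (fstar (X ω) (Y ω))) μ)
    (hInt₂ : Integrable (fun ω => -Real.log (gstar (Z ω) (Y ω))) μ) :
    (∫ ω, -Real.log (fstar (X ω) (Y ω)) ∂μ) - (∫ ω, -Real.log (gstar (Z ω) (Y ω)) ∂μ) = 0 ↔
      ∀ k : Fin K, (fun ω => fstar (X ω) k) =ᵐ[μ] (fun ω => gstar (Z ω) k) := by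
  have hmask : Measurable fun (x : Fin d → ℝ) i => if i ∈ S then 0 else x i :=
    measurable_pi_lambda _ fun i => by split_ifs; exacts [measurable_const, measurable_pi_apply i]
  have hZX : Measurable[MeasurableSpace.comap X MeasurableSpace.pi] Z := by
    convert hmask.comp (comap_measurable X) using 1
    exact funext fun ω => funext (hZ ω)
  exact integral_neg_log_sub_eq_zero_iff (p := fun k ω => fstar (X ω) k)
    (q := fun k ω => gstar (Z ω) k) hZX.comap_le hX.comap_le hY hfstar hgstar hInt₁ hInt₂

/-- Under the cross-entropy loss, risk invariance `R(f*) = R_S(g*)` is equivalent to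
conditional independence of `Y` and `X_S` given `X_{S^c}` almost surely, i.e. to
`P(Y = k | X) = P(Y = k | Z)` a.s. for every class `k`, where `Z` is the masked
feature vector.  Here `fstar` and `gstar` are the population minimizers, i.e. versions
of the conditional class probabilities given `X` and given `Z` respectively. -/
theorem crossEntropy_risk_invariance_iff_cond_indep
    {Ω : Type*} [MeasurableSpace Ω]
    {d K : ℕ} (μ : Measure Ω) [IsProbabilityMeasure μ]
    (X : Ω → Fin d → ℝ) (Y : Ω → Fin K) (S : Finset (Fin d))
    (Z : Ω → Fin d → ℝ)
    (hZ : ∀ ω i, Z ω i = if i ∈ S then 0 else X ω i)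
    (hX : Measurable X) (hY : Measurable Y)
    (fstar gstar : (Fin d → ℝ) → Fin K → ℝ)
    (hfmeas : Measurable fstar) (hgmeas : Measurable gstar)
    -- `fstar k (X ω)` is a version of `P(Y = k | X)`
    (hfstar : ∀ k : Fin K, (fun ω => fstar (X ω) k)
      =ᵐ[μ] μ[(fun ω => if Y ω = k then (1 : ℝ) else 0) |
        MeasurableSpace.comap X MeasurableSpace.pi])
    -- `gstar k (Z ω)` is a version of `P(Y = k | Z)`
    (hgstar : ∀ k : Fin K, (fun ω => gstar (Z ω) k)
      =ᵐ[μ] μ[(fun ω => if Y ω = k then (1 : ℝ) else 0) |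
        MeasurableSpace.comap Z MeasurableSpace.pi])
    -- integrability of the two cross-entropy losses
    (hInt₁ : Integrable (fun ω => -Real.log (fstar (X ω) (Y ω))) μ)
    (hInt₂ : Integrable (fun ω => -Real.log (gstar (Z ω) (Y ω))) μ) :
    (∫ ω, -Real.log (fstar (X ω) (Y ω)) ∂μ) - (∫ ω, -Real.log (gstar (Z ω) (Y ω)) ∂μ) = 0 ↔
      ∀ k : Fin K, (fun ω => fstar (X ω) k) =ᵐ[μ] (fun ω => gstar (Z ω) k) :=
  crossEntropy_risk_invariance_iff_cond_indep_general μ X Y S Z hZ hX hY fstar gstar hfstar hgstar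
    hInt₁ hInt₂
end

section
/- Let P_1,...,P_U be random variables each asymptotically uniform on [0,1] in the sense that lim_{n→∞} P(P_u ≤ t) = t for each t ∈ [0,1] and each u (no independence assumed). For a fixed integer 1 ≤ q ≤ U, define the q-order combined p-value P̄ = min((U/q)·P_{(q)}, 1), where P_{(q)} is the q-th order statistic. Then for any 0 < α < 1, limsup_{n→∞} P(P̄ ≤ α) ≤ α. -/
/-!
The combined p-value is at most `α` exactly when at least `q` of the `P_u` are at most
`t = qα/U`. By Markov's inequality for this count, the probability of that event is at most
`(1/q) ∑_u P(P_u ≤ t)`, which tends to `Ut/q = α` by the asymptotic uniformity of the marginals.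
-/

open MeasureTheory ProbabilityTheory Filter Topology

/-- The `q`-th smallest entry (0-indexed) of a finite tuple of reals. -/
noncomputable def orderStat {U : ℕ} (x : Fin U → ℝ) (q : Fin U) : ℝ :=
  x (Tuple.sort x q)

open Finset
open scoped ENNReal

theorem orderStat_le_iff_lt_card {U : ℕ} (x : Fin U → ℝ) (j : Fin U) (t : ℝ) :
    orderStat x j ≤ t ↔ (j : ℕ) < #{u | x u ≤ t} := by
  rw [← card_equiv (Tuple.sort x) (s := {i | (x ∘ Tuple.sort x) i ≤ t}) (fun _ => by simp),
    Tuple.lt_card_le_iff_apply_le_of_monotone (Tuple.monotone_sort x)]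
  rfl

theorem mul_measure_card_ge_le_sum {Ω ι : Type*} [MeasurableSpace Ω] [Fintype ι]
    (μ : Measure Ω) {f : ι → Ω → ℝ} (hf : ∀ i, Measurable (f i)) (t : ℝ) (k : ℕ) :
    k * μ {ω | k ≤ #{i | f i ω ≤ t}} ≤ ∑ i, μ {ω | f i ω ≤ t} := by
  have hs : ∀ i, MeasurableSet {ω | f i ω ≤ t} := fun i => measurableSet_le (hf i) measurable_const
  have hcount : ∀ ω, (#{i | f i ω ≤ t} : ℝ≥0∞) = ∑ i, {ω | f i ω ≤ t}.indicator 1 ω := by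
    intro ω
    simp [Set.indicator_apply, sum_boole]
  calc (k : ℝ≥0∞) * μ {ω | k ≤ #{i | f i ω ≤ t}}
      = k * μ {ω | (k : ℝ≥0∞) ≤ ∑ i, {ω | f i ω ≤ t}.indicator 1 ω} := by
        simp_rw [← hcount, Nat.cast_le]
    _ ≤ ∫⁻ ω, ∑ i, {ω | f i ω ≤ t}.indicator 1 ω ∂μ :=
        mul_meas_ge_le_lintegral (Finset.measurable_sum _ fun i _ => measurable_one.indicator (hs i)) _
    _ = ∑ i, μ {ω | f i ω ≤ t} := by
        rw [lintegral_finsetSum _ fun i _ => measurable_one.indicator (hs i)]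
        simp_rw [lintegral_indicator_one (hs _)]

theorem measureReal_orderStat_le_le_sum_div {Ω : Type*} [MeasurableSpace Ω] (μ : Measure Ω)
    [IsFiniteMeasure μ] {U : ℕ} {X : Fin U → Ω → ℝ} (hX : ∀ u, Measurable (X u)) (j : Fin U)
    (t : ℝ) :
    μ.real {ω | orderStat (X · ω) j ≤ t} ≤ (∑ u, μ.real {ω | X u ω ≤ t}) / (j + 1) := by
  simp_rw [orderStat_le_iff_lt_card, Nat.lt_iff_add_one_le]
  have hfin : ∀ u ∈ univ, μ {ω | X u ω ≤ t} ≠ ∞ := fun _ _ => measure_ne_top _ _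
  have hmarkov := ENNReal.toReal_mono (ENNReal.sum_ne_top.mpr hfin)
    (mul_measure_card_ge_le_sum μ hX t (j + 1))
  rw [ENNReal.toReal_mul, ENNReal.toReal_natCast, ENNReal.toReal_sum hfin] at hmarkov
  rw [le_div_iff₀ (by positivity)]
  simpa [measureReal_def, mul_comm] using hmarkov

theorem Filter.limsup_le_of_le_of_tendsto {β : Type*} {l : Filter β} [l.NeBot] {f g : β → ℝ}
    {a : ℝ} (hf : IsBoundedUnder (· ≥ ·) l f) (hfg : f ≤ᶠ[l] g) (hg : Tendsto g l (𝓝 a)) :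
    limsup f l ≤ a :=
  hg.limsup_eq ▸ limsup_le_limsup hfg hf.isCoboundedUnder_le hg.isBoundedUnder_le

theorem min_mul_le_iff_le_div {a y α : ℝ} (ha : 0 < a) (hα : α < 1) :
    min (a * y) 1 ≤ α ↔ y ≤ α / a := by
  rw [min_le_iff, le_div_iff₀' ha]
  exact or_iff_left hα.not_ge

/-- Type I error control of the `q`-order combined test: if the p-values
`P n 1, …, P n U` are each asymptotically uniform on `[0,1]` (no independence assumed),
then the combined p-value `P̄ = min((U/q) P_{(q)}, 1)` satisfies
`limsup_n P(P̄ ≤ α) ≤ α` for every `0 < α < 1`. -/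
theorem q_order_combined_type1
    {Ω : Type*} [MeasurableSpace Ω] (μ : Measure Ω) [IsProbabilityMeasure μ]
    {U : ℕ} (P : ℕ → Fin U → Ω → ℝ)
    (hmeas : ∀ n u, Measurable (P n u))
    -- each marginal p-value is asymptotically uniform on `[0,1]`
    (hUnif : ∀ u : Fin U, ∀ t ∈ Set.Icc (0:ℝ) 1,
      Tendsto (fun n => (μ {ω | P n u ω ≤ t}).toReal) atTop (𝓝 t))
    (q : ℕ) (hq1 : 1 ≤ q) (hqU : q ≤ U)
    (α : ℝ) (hα : α ∈ Set.Ioo (0:ℝ) 1) :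
    Filter.limsup
      (fun n => (μ {ω | min (((U : ℝ) / q) *
        orderStat (fun u => P n u ω) ⟨q - 1, by omega⟩) 1 ≤ α}).toReal) atTop ≤ α := by
  obtain ⟨hα0, hα1⟩ := hα
  have hq : (0 : ℝ) < q := by exact_mod_cast hq1
  have hqU' : (q : ℝ) ≤ U := by exact_mod_cast hqU
  have hU : (0 : ℝ) < U := hq.trans_le hqU'
  have hUq : 1 ≤ (U : ℝ) / q := (one_le_div hq).mpr hqU'
  set t := α / (U / q) with ht
  have ht_mem : t ∈ Set.Icc (0 : ℝ) 1 :=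
    ⟨by positivity, (div_le_one (by positivity)).mpr (hα1.le.trans hUq)⟩
  refine limsup_le_of_le_of_tendsto (g := fun n => (∑ u, (μ {ω | P n u ω ≤ t}).toReal) / q)
    (isBoundedUnder_of_eventually_ge (.of_forall fun _ => ENNReal.toReal_nonneg))
    (.of_forall fun n => ?_) ?_
  · simp_rw [min_mul_le_iff_le_div (div_pos hU hq) hα1, ← ht]
    refine (measureReal_orderStat_le_le_sum_div μ (hmeas n) ⟨q - 1, by omega⟩ t).trans_eq ?_
    simp [measureReal_def, Nat.cast_sub hq1]
  · convert (tendsto_finsetSum univ fun u _ => hUnif u t ht_mem).div_const (q : ℝ) using 2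
    simp only [sum_const, card_univ, Fintype.card_fin, nsmul_eq_mul, ht]
    field_simp
end

section
/- Let P_1,...,P_U be exactly uniform on [0,1] (arbitrarily dependent). Define the Hommel combined p-value P̄ = min(C_U · min_{1≤q≤U} (U/q) P_{(q)}, 1) with C_U = Σ_{q=1}^U 1/q. Then for any 0 < α < 1, P(P̄ ≤ α) ≤ α. -/
open MeasureTheory ProbabilityTheory Filter Topology

/-!
Write `N(t)` for the number of p-values `≤ t` and `t_k = α k / (C_U U)`. If `P̄ ≤ α`, then
`C_U (U/k) P_(k) ≤ α` for some `k`, i.e. `N(t_k) ≥ k`. Since `1/k = ∑_{i=k}^{U-1} 1/(i(i+1)) + 1/U`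
and `N` is monotone, on this event `1 ≤ ∑_{i=1}^{U} w_i N(t_i)` with the weights `w_i` of that
decomposition. The right side has expectation at most `∑_i w_i U t_i = (α/C_U) ∑_i i w_i = α`
(exchanging sums, `∑_i i w_i = ∑_k ∑_{i ≥ k} w_i = C_U`), so Markov's inequality concludes.
-/

open Finset
open scoped ENNReal

lemma succ_le_card_filter_of_orderStat_le {U : ℕ} (x : Fin U → ℝ) (q : Fin U) {t : ℝ}
    (h : orderStat x q ≤ t) : (q : ℕ) + 1 ≤ #{u | x u ≤ t} := by
  calc (q : ℕ) + 1 = #((Iic q).image (Tuple.sort x)) := by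
        rw [card_image_of_injective _ (Tuple.sort x).injective, Fin.card_Iic]
    _ ≤ #{u | x u ≤ t} := card_le_card fun u hu => by
        obtain ⟨p, hp, rfl⟩ := mem_image.1 hu
        exact mem_filter.2 ⟨mem_univ _, (Tuple.monotone_sort x (mem_Iic.1 hp)).trans h⟩

lemma exists_le_card_filter_le_of_mul_iInf_le {U : ℕ} (hU : 0 < U) (x : Fin U → ℝ) {C α : ℝ}
    (hC : 0 < C) (h : C * ⨅ q : Fin U, ((U : ℝ) / ((q : ℕ) + 1)) * orderStat x q ≤ α) :
    ∃ k ∈ Icc 1 U, k ≤ #{u | x u ≤ α / (C * U) * k} := by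
  have : Nonempty (Fin U) := ⟨⟨0, hU⟩⟩
  obtain ⟨q, hq⟩ := exists_eq_ciInf_of_finite
    (f := fun q : Fin U => ((U : ℝ) / ((q : ℕ) + 1)) * orderStat x q)
  refine ⟨q + 1, mem_Icc.2 ⟨by omega, q.isLt⟩, succ_le_card_filter_of_orderStat_le x q ?_⟩
  rw [← hq] at h
  rw [div_mul_eq_mul_div, le_div_iff₀ (by positivity)]
  calc orderStat x q * (C * U) = C * ((U / ((q : ℕ) + 1)) * orderStat x q) * ((q : ℕ) + 1) := by
        field_simp
    _ ≤ α * ((q + 1 : ℕ) : ℝ) := by push_cast; gcongr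

noncomputable def hommelWeight (U i : ℕ) : ℝ := if i < U then 1 / (i * (i + 1)) else 1 / U

lemma hommelWeight_nonneg (U i : ℕ) : 0 ≤ hommelWeight U i := by
  unfold hommelWeight; split_ifs <;> positivity

lemma sum_Icc_hommelWeight {U k : ℕ} (hk : 1 ≤ k) (hkU : k ≤ U) :
    ∑ i ∈ Icc k U, hommelWeight U i = 1 / k := by
  induction hkU using Nat.decreasingInduction with
  | self => simp [hommelWeight]
  | of_succ k hkU ih =>
    rw [← insert_Icc_add_one_left_eq_Icc hkU.le, sum_insert (by simp), ih (by omega),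
      hommelWeight, if_pos hkU]
    have : (0 : ℝ) < k := by exact_mod_cast hk
    field_simp
    push_cast
    ring

lemma sum_Icc_mul_hommelWeight (U : ℕ) :
    ∑ i ∈ Icc 1 U, i * hommelWeight U i = ∑ q ∈ range U, (1 : ℝ) / (q + 1) := by
  calc ∑ i ∈ Icc 1 U, i * hommelWeight U i
      = ∑ i ∈ Icc 1 U, ∑ k ∈ Icc 1 i, hommelWeight U i := by simp
    _ = ∑ k ∈ Icc 1 U, ∑ i ∈ Icc k U, hommelWeight U i :=
        sum_comm' (by intros; simp only [mem_Icc]; omega)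
    _ = ∑ k ∈ Icc 1 U, (1 : ℝ) / k :=
        sum_congr rfl fun k hk => sum_Icc_hommelWeight (mem_Icc.1 hk).1 (mem_Icc.1 hk).2
    _ = ∑ q ∈ range U, (1 : ℝ) / (q + 1) := by
        have := congrArg (Rat.cast : ℚ → ℝ) (harmonic_eq_sum_Icc (n := U))
        push_cast [harmonic] at this
        simpa [one_div] using this.symm

lemma one_le_sum_hommelWeight_mul {U k : ℕ} {n : ℕ → ℝ} (hn : Monotone n) (hn0 : ∀ i, 0 ≤ n i)
    (hk : 1 ≤ k) (hkU : k ≤ U) (hkn : k ≤ n k) :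
    1 ≤ ∑ i ∈ Icc 1 U, hommelWeight U i * n i := by
  have hk0 : (0 : ℝ) < k := by exact_mod_cast hk
  calc (1 : ℝ) = ∑ i ∈ Icc k U, hommelWeight U i * k := by
        rw [← sum_mul, sum_Icc_hommelWeight hk hkU]; field_simp
    _ ≤ ∑ i ∈ Icc k U, hommelWeight U i * n i :=
        sum_le_sum fun i hi => mul_le_mul_of_nonneg_left
          (hkn.trans (hn (mem_Icc.1 hi).1)) (hommelWeight_nonneg U i)
    _ ≤ ∑ i ∈ Icc 1 U, hommelWeight U i * n i :=
        sum_le_sum_of_subset_of_nonneg (Icc_subset_Icc_left hk)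
          fun i _ _ => mul_nonneg (hommelWeight_nonneg U i) (hn0 i)

lemma one_le_sum_hommelWeight_mul_card {ι : Type*} [Fintype ι] (x : ι → ℝ) {c : ℝ} (hc : 0 ≤ c)
    {U k : ℕ} (hk : k ∈ Icc 1 U) (hkN : k ≤ #{u | x u ≤ c * k}) :
    1 ≤ ∑ i ∈ Icc 1 U, ENNReal.ofReal (hommelWeight U i) * #{u | x u ≤ c * i} := by
  have hmono : Monotone fun i : ℕ => (#{u | x u ≤ c * i} : ℝ) := fun i j hij => by
    have hcij : c * i ≤ c * j := by gcongr
    exact Nat.mono_cast (card_le_card (monotone_filter_right _ fun u _ h => h.trans hcij))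
  have hreal := one_le_sum_hommelWeight_mul hmono (fun _ => Nat.cast_nonneg _)
    (mem_Icc.1 hk).1 (mem_Icc.1 hk).2 (by exact_mod_cast hkN)
  calc (1 : ℝ≥0∞) = ENNReal.ofReal 1 := ENNReal.ofReal_one.symm
    _ ≤ _ := ENNReal.ofReal_le_ofReal hreal
    _ = _ := by
      rw [ENNReal.ofReal_sum_of_nonneg fun i _ =>
        mul_nonneg (hommelWeight_nonneg U i) (Nat.cast_nonneg _)]
      simp only [ENNReal.ofReal_mul (hommelWeight_nonneg U _), ENNReal.ofReal_natCast]

lemma card_filter_le_eq_sum_indicator {Ω ι : Type*} [Fintype ι] (P : ι → Ω → ℝ) (t : ℝ) (ω : Ω) :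
    (#{u | P u ω ≤ t} : ℝ≥0∞) = ∑ u, {ω | P u ω ≤ t}.indicator 1 ω := by
  simp [Set.indicator_apply]

section

variable {Ω ι : Type*} [MeasurableSpace Ω] [Fintype ι] {P : ι → Ω → ℝ}

lemma measurable_card_filter_le (hP : ∀ u, Measurable (P u)) (t : ℝ) :
    Measurable fun ω => (#{u | P u ω ≤ t} : ℝ≥0∞) := by
  simp_rw [card_filter_le_eq_sum_indicator]
  exact Finset.measurable_sum _ fun u _ => measurable_one.indicator (hP u measurableSet_Iic)

lemma lintegral_card_filter_le (μ : Measure Ω) (hP : ∀ u, Measurable (P u)) (t : ℝ) :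
    ∫⁻ ω, (#{u | P u ω ≤ t} : ℝ≥0∞) ∂μ = ∑ u, μ {ω | P u ω ≤ t} := by
  have hA (u : ι) : MeasurableSet {ω | P u ω ≤ t} := hP u measurableSet_Iic
  simp_rw [card_filter_le_eq_sum_indicator]
  rw [lintegral_finsetSum _ fun u _ => measurable_one.indicator (hA u)]
  exact sum_congr rfl fun u _ => lintegral_indicator_one (hA u)

end

lemma measure_exists_le_card_filter_le {Ω ι : Type*} [MeasurableSpace Ω] [Fintype ι]
    (μ : Measure Ω) {P : ι → Ω → ℝ} (hP : ∀ u, Measurable (P u)) {c : ℝ} (hc : 0 ≤ c)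
    {U : ℕ} (hU : Fintype.card ι = U)
    (hvalid : ∀ u, ∀ k ∈ Icc 1 U, μ {ω | P u ω ≤ c * k} ≤ ENNReal.ofReal (c * k)) :
    μ {ω | ∃ k ∈ Icc 1 U, k ≤ #{u | P u ω ≤ c * k}}
      ≤ ENNReal.ofReal (c * U * ∑ q ∈ range U, (1 : ℝ) / (q + 1)) := by
  set f : Ω → ℝ≥0∞ := fun ω =>
    ∑ i ∈ Icc 1 U, ENNReal.ofReal (hommelWeight U i) * #{u | P u ω ≤ c * i}
  have hf : Measurable f := Finset.measurable_sum _ fun i _ =>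
    (measurable_card_filter_le hP _).const_mul _
  have h_event : {ω | ∃ k ∈ Icc 1 U, k ≤ #{u | P u ω ≤ c * k}} ⊆ {ω | 1 ≤ f ω} :=
    fun ω ⟨k, hk, hkN⟩ => one_le_sum_hommelWeight_mul_card (P · ω) hc hk hkN
  have h_lintegral : ∫⁻ ω, f ω ∂μ
      ≤ ENNReal.ofReal (∑ i ∈ Icc 1 U, hommelWeight U i * (U * (c * i))) := by
    rw [lintegral_finsetSum _ fun i _ => (measurable_card_filter_le hP _).const_mul _,
      ENNReal.ofReal_sum_of_nonneg fun i _ => by have := hommelWeight_nonneg U i; positivity]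
    gcongr with i hi
    rw [lintegral_const_mul _ (measurable_card_filter_le hP _), lintegral_card_filter_le μ hP,
      ENNReal.ofReal_mul (hommelWeight_nonneg U i), ENNReal.ofReal_mul (Nat.cast_nonneg _),
      ENNReal.ofReal_natCast]
    gcongr
    calc ∑ u, μ {ω | P u ω ≤ c * i} ≤ ∑ _u : ι, ENNReal.ofReal (c * i) :=
          sum_le_sum fun u _ => hvalid u i hi
      _ = U * ENNReal.ofReal (c * i) := by simp [hU]
  calc μ {ω | ∃ k ∈ Icc 1 U, k ≤ #{u | P u ω ≤ c * k}} ≤ μ {ω | 1 ≤ f ω} := measure_mono h_event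
    _ ≤ ∫⁻ ω, f ω ∂μ := by simpa using mul_meas_ge_le_lintegral₀ hf.aemeasurable 1
    _ ≤ _ := h_lintegral
    _ = ENNReal.ofReal (c * U * ∑ q ∈ range U, (1 : ℝ) / (q + 1)) := by
        rw [← sum_Icc_mul_hommelWeight, mul_sum]
        congr 1
        exact sum_congr rfl fun i _ => by ring

theorem hommel_combined_type1_general
    {Ω : Type*} [MeasurableSpace Ω] (μ : Measure Ω)
    {U : ℕ} (hU : 2 ≤ U) (P : Fin U → Ω → ℝ)
    (hmeas : ∀ u, Measurable (P u))
    -- each marginal p-value is exactly uniform on `[0,1]`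
    (hUnif : ∀ u : Fin U, ∀ t ∈ Set.Icc (0:ℝ) 1,
      μ {ω | P u ω ≤ t} = ENNReal.ofReal t)
    (α : ℝ) (hα : α ∈ Set.Ioo (0:ℝ) 1) :
    μ {ω | min ((∑ q ∈ Finset.range U, (1 : ℝ) / (q + 1)) *
        ⨅ q : Fin U, ((U : ℝ) / ((q : ℕ) + 1)) * orderStat (fun u => P u ω) q) 1 ≤ α}
      ≤ ENNReal.ofReal α := by
  obtain ⟨hα0, hα1⟩ := hα
  have hC : 1 ≤ ∑ q ∈ range U, (1 : ℝ) / (q + 1) := by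
    simpa using single_le_sum (f := fun q : ℕ => (1 : ℝ) / (q + 1))
      (fun _ _ => by positivity) (mem_range.2 (by omega : 0 < U))
  set C := ∑ q ∈ range U, (1 : ℝ) / (q + 1)
  have hU0 : (0 : ℝ) < U := by exact_mod_cast (by omega : 0 < U)
  have hthreshold (k : ℕ) (hk : k ∈ Icc 1 U) : α / (C * U) * k ∈ Set.Icc (0 : ℝ) 1 := by
    refine ⟨by positivity, ?_⟩
    rw [div_mul_eq_mul_div, div_le_one (by positivity)]
    have : (k : ℝ) ≤ U := by exact_mod_cast (mem_Icc.1 hk).2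
    nlinarith
  calc _ ≤ μ {ω | ∃ k ∈ Icc 1 U, k ≤ #{u | P u ω ≤ α / (C * U) * k}} :=
        measure_mono fun ω hω => exists_le_card_filter_le_of_mul_iInf_le (by omega) _
          (by positivity) ((min_le_iff.1 hω).resolve_right hα1.not_ge)
    _ ≤ ENNReal.ofReal (α / (C * U) * U * C) :=
        measure_exists_le_card_filter_le μ hmeas (by positivity) (Fintype.card_fin U)
          fun u k hk => (hUnif u _ (hthreshold k hk)).le
    _ = ENNReal.ofReal α := by field_simp

/-- Hommel's inequality: for arbitrarily dependent p-values `P 1, …, P U`, each exactly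
uniform on `[0,1]`, the Hommel combined p-value
`P̄ = min(C_U · min_{1 ≤ q ≤ U} (U/q) P_{(q)}, 1)` with `C_U = ∑_{q=1}^U 1/q`
satisfies `P(P̄ ≤ α) ≤ α` for every `0 < α < 1`. -/
theorem hommel_combined_type1
    {Ω : Type*} [MeasurableSpace Ω] (μ : Measure Ω) [IsProbabilityMeasure μ]
    {U : ℕ} (hU : 2 ≤ U) (P : Fin U → Ω → ℝ)
    (hmeas : ∀ u, Measurable (P u))
    -- each marginal p-value is exactly uniform on `[0,1]`
    (hUnif : ∀ u : Fin U, ∀ t ∈ Set.Icc (0:ℝ) 1,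
      μ {ω | P u ω ≤ t} = ENNReal.ofReal t)
    (α : ℝ) (hα : α ∈ Set.Ioo (0:ℝ) 1) :
    μ {ω | min ((∑ q ∈ Finset.range U, (1 : ℝ) / (q + 1)) *
        ⨅ q : Fin U, ((U : ℝ) / ((q : ℕ) + 1)) * orderStat (fun u => P u ω) q) 1 ≤ α}
      ≤ ENNReal.ofReal α :=
  hommel_combined_type1_general μ hU P hmeas hUnif α hα
end

section
/- Let Z ~ N(0,1) and a ∈ R. Then Var(Φ(Z + a)) = Φ(a/√2) - Φ(a/√2)² - 2T(a/√2, 1/√3), where T(h, b) = (1/(2π)) ∫_0^b exp(-h²(1+x²)/2)/(x²+1) dx is Owen's T function. -/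
open MeasureTheory ProbabilityTheory Filter

/-- The standard normal cumulative distribution function. -/
noncomputable def stdGaussianCDF (t : ℝ) : ℝ :=
  ((gaussianReal 0 1) (Set.Iic t)).toReal

/-- Owen's T function `T(h, b) = (1/(2π)) ∫_0^b exp(-h²(1+x²)/2)/(x²+1) dx`. -/
noncomputable def owenT (h b : ℝ) : ℝ :=
  (1 / (2 * Real.pi)) * ∫ x in (0:ℝ)..b, Real.exp (-h ^ 2 * (1 + x ^ 2) / 2) / (x ^ 2 + 1)

/-!
Both moments are computed by differentiating in the shift and comparing limits at `-∞`.
Completing the square gives `φ(x) φ(cx + v) = φ(v/s) φ(sx + cv/s)` with `s = √(1 + c²)`,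
so `d/dv E[Φ(cZ + v)] = φ(v/s)/s`, whence `E[Φ(cZ + d)] = Φ(d/s)`. The same identity turns
`d/da E[Φ(Z + a)²] = 2 E[Φ(Z + a) φ(Z + a)]` into `√2 φ(a/√2) Φ(a/√6)`, which by
`∂T/∂h (h, b) = -φ(h) (Φ(hb) - 1/2)` is also the derivative of
`Φ(a/√2) - 2 T(a/√2, 1/√3)`.
-/

open Real
open scoped Topology

local notation "φ" => gaussianPDFReal 0 1
local notation "Φ" => stdGaussianCDF

lemma gaussianPDFReal_zero_one (x : ℝ) : φ x = (√(2 * π))⁻¹ * exp (-x ^ 2 / 2) := by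
  simp [gaussianPDFReal]

lemma abs_gaussianPDFReal_zero_one_le (x : ℝ) : |φ x| ≤ (√(2 * π))⁻¹ := by
  rw [abs_of_nonneg (gaussianPDFReal_nonneg 0 1 x), gaussianPDFReal_zero_one]
  exact mul_le_of_le_one_right (by positivity) (exp_le_one_iff.2 (by nlinarith [sq_nonneg x]))

lemma stdGaussianCDF_eq_cdf : Φ = cdf (gaussianReal 0 1) := by
  ext t
  rw [cdf_eq_real, measureReal_def, stdGaussianCDF]

lemma stdGaussianCDF_nonneg (t : ℝ) : 0 ≤ Φ t := by
  rw [stdGaussianCDF_eq_cdf]; exact cdf_nonneg _ t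

lemma stdGaussianCDF_le_one (t : ℝ) : Φ t ≤ 1 := by
  rw [stdGaussianCDF_eq_cdf]; exact cdf_le_one _ t

lemma abs_stdGaussianCDF_le_one (t : ℝ) : |Φ t| ≤ 1 :=
  abs_le.2 ⟨by linarith [stdGaussianCDF_nonneg t], stdGaussianCDF_le_one t⟩

lemma tendsto_stdGaussianCDF_atBot : Tendsto Φ atBot (𝓝 0) := by
  rw [stdGaussianCDF_eq_cdf]; exact tendsto_cdf_atBot _

lemma stdGaussianCDF_eq_setIntegral (t : ℝ) : Φ t = ∫ x in Set.Iic t, φ x := by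
  rw [stdGaussianCDF, gaussianReal_apply_eq_integral 0 one_ne_zero,
    ENNReal.toReal_ofReal
      (setIntegral_nonneg measurableSet_Iic fun x _ ↦ gaussianPDFReal_nonneg 0 1 x)]

lemma stdGaussianCDF_sub_stdGaussianCDF (s t : ℝ) : Φ t - Φ s = ∫ x in s..t, φ x := by
  rw [stdGaussianCDF_eq_setIntegral, stdGaussianCDF_eq_setIntegral,
    intervalIntegral.integral_Iic_sub_Iic (integrable_gaussianPDFReal 0 1).integrableOn
      (integrable_gaussianPDFReal 0 1).integrableOn]

lemma continuous_gaussianPDFReal (m : ℝ) (v : NNReal) : Continuous (gaussianPDFReal m v) := by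
  rw [gaussianPDFReal_def]; fun_prop

lemma hasDerivAt_stdGaussianCDF (t : ℝ) : HasDerivAt Φ (φ t) t := by
  have hcont := continuous_gaussianPDFReal 0 1
  have h := (intervalIntegral.integral_hasDerivAt_right
    (integrable_gaussianPDFReal 0 1).intervalIntegrable
    hcont.stronglyMeasurable.stronglyMeasurableAtFilter (hcont.continuousAt (x := t))
    (a := 0)).const_add (Φ 0)
  refine h.congr_of_eventuallyEq (Eventually.of_forall fun u ↦ ?_)
  simp only [← stdGaussianCDF_sub_stdGaussianCDF, add_sub_cancel]

lemma continuous_stdGaussianCDF : Continuous Φ :=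
  continuous_iff_continuousAt.2 fun t ↦ (hasDerivAt_stdGaussianCDF t).continuousAt

lemma stdGaussianCDF_zero : Φ 0 = 1 / 2 := by
  have hsymm : ∫ x in Set.Iic 0, φ x = ∫ x in Set.Ioi 0, φ x := by
    simpa [gaussianPDFReal_zero_one] using integral_comp_neg_Iic 0 φ
  have htotal := intervalIntegral.integral_Iic_add_Ioi (b := 0)
    (integrable_gaussianPDFReal 0 1).integrableOn (integrable_gaussianPDFReal 0 1).integrableOn
  rw [integral_gaussianPDFReal_eq_one 0 one_ne_zero] at htotal
  rw [stdGaussianCDF_eq_setIntegral]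
  linarith

lemma eq_of_hasDerivAt_of_tendsto_atBot {F G f : ℝ → ℝ}
    (hF : ∀ x, HasDerivAt F (f x) x) (hG : ∀ x, HasDerivAt G (f x) x)
    (hF0 : Tendsto F atBot (𝓝 0)) (hG0 : Tendsto G atBot (𝓝 0)) : F = G := by
  have hderiv : ∀ x, HasDerivAt (F - G) 0 x := fun x ↦ by simpa using (hF x).sub (hG x)
  have hconst : ∀ x, (F - G) x = (F - G) 0 := fun x ↦
    is_const_of_deriv_eq_zero (fun y ↦ (hderiv y).differentiableAt)
      (fun y ↦ (hderiv y).deriv) x 0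
  have hzero : (F - G) 0 = 0 :=
    tendsto_nhds_unique (tendsto_const_nhds.congr fun x ↦ (hconst x).symm)
      (by simpa using hF0.sub hG0 : Tendsto (fun x ↦ F x - G x) atBot (𝓝 0))
  funext x
  exact sub_eq_zero.1 ((hconst x).trans hzero)

section IntegralCompAdd

variable {α : Type*} [MeasurableSpace α] {μ : Measure α} [IsFiniteMeasure μ] {f : α → ℝ}
  {G : ℝ → ℝ} {B : ℝ}

lemma hasDerivAt_integral_comp_add {G' : ℝ → ℝ} {C : ℝ} (hf : Measurable f)
    (hG : ∀ y, HasDerivAt G (G' y) y) (hGB : ∀ y, |G y| ≤ B) (hG'C : ∀ y, |G' y| ≤ C)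
    (v : ℝ) :
    HasDerivAt (fun w ↦ ∫ x, G (f x + w) ∂μ) (∫ x, G' (f x + v) ∂μ) v := by
  have hGm : Measurable G :=
    (continuous_iff_continuousAt.2 fun y ↦ (hG y).continuousAt).measurable
  have hG'm : Measurable G' := by
    rw [show G' = deriv G from funext fun y ↦ (hG y).deriv.symm]
    exact measurable_deriv G
  refine (hasDerivAt_integral_of_dominated_loc_of_deriv_le (bound := fun _ ↦ C) Filter.univ_mem
    (Eventually.of_forall fun w ↦ (hGm.comp (hf.add_const w)).aestronglyMeasurable)
    (Integrable.of_bound (hGm.comp (hf.add_const v)).aestronglyMeasurable B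
      (ae_of_all _ fun x ↦ hGB _))
    (hG'm.comp (hf.add_const v)).aestronglyMeasurable
    (ae_of_all _ fun x w _ ↦ hG'C _) (integrable_const C)
    (ae_of_all _ fun x w _ ↦ ?_)).2
  simpa [Function.comp_def] using (hG (f x + w)).comp w ((hasDerivAt_id w).const_add (f x))

lemma tendsto_integral_comp_add_atBot (hf : Measurable f) (hGm : Measurable G)
    (hGB : ∀ y, |G y| ≤ B) (hG0 : Tendsto G atBot (𝓝 0)) :
    Tendsto (fun w ↦ ∫ x, G (f x + w) ∂μ) atBot (𝓝 0) := by
  simpa using tendsto_integral_filter_of_dominated_convergence (μ := μ) (l := atBot) (fun _ ↦ B)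
    (Eventually.of_forall fun w ↦ (hGm.comp (hf.add_const w)).aestronglyMeasurable)
    (Eventually.of_forall fun w ↦ ae_of_all _ fun x ↦ hGB _) (integrable_const B)
    (ae_of_all _ fun x ↦ hG0.comp (tendsto_atBot_add_const_left _ (f x) tendsto_id))

end IntegralCompAdd

lemma gaussianPDFReal_mul_gaussianPDFReal (c v x : ℝ) :
    φ x * φ (c * x + v) =
      φ (v / √(1 + c ^ 2)) * φ (√(1 + c ^ 2) * x + c * v / √(1 + c ^ 2)) := by
  have hs : √(1 + c ^ 2) ^ 2 = 1 + c ^ 2 := sq_sqrt (by positivity)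
  have hs0 : √(1 + c ^ 2) ≠ 0 := by positivity
  simp only [gaussianPDFReal_zero_one]
  rw [mul_mul_mul_comm, mul_mul_mul_comm _ (exp _), ← exp_add, ← exp_add]
  congr 2
  field_simp
  rw [hs]
  ring

lemma integral_mul_gaussianPDFReal_mul_add (g : ℝ → ℝ) (c v : ℝ) :
    ∫ x, g x * φ (c * x + v) ∂gaussianReal 0 1 =
      φ (v / √(1 + c ^ 2)) / √(1 + c ^ 2) *
        ∫ x, g ((x - c * v / √(1 + c ^ 2)) / √(1 + c ^ 2)) ∂gaussianReal 0 1 := by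
  set s := √(1 + c ^ 2)
  have hs : 0 < s := by positivity
  set H : ℝ → ℝ := fun y ↦ φ y * g ((y - c * v / s) / s)
  have hpoint : ∀ x,
      φ x * (g x * φ (c * x + v)) = φ (v / s) * H (s * (x + c * v / s ^ 2)) := by
    intro x
    have hx : s * (x + c * v / s ^ 2) = s * x + c * v / s := by field_simp
    rw [hx, mul_left_comm, gaussianPDFReal_mul_gaussianPDFReal]
    simp only [H, add_sub_cancel_right, mul_div_cancel_left₀ x hs.ne']
    ring
  simp only [integral_gaussianReal_eq_integral_smul one_ne_zero, smul_eq_mul, hpoint,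
    integral_const_mul]
  rw [integral_add_right_eq_self (fun x ↦ H (s * x)), Measure.integral_comp_mul_left,
    abs_inv, abs_of_pos hs, smul_eq_mul]
  ring

lemma integral_stdGaussianCDF_mul_add (c d : ℝ) :
    ∫ x, Φ (c * x + d) ∂gaussianReal 0 1 = Φ (d / √(1 + c ^ 2)) := by
  set s := √(1 + c ^ 2)
  have hs : 0 < s := by positivity
  refine congrFun (eq_of_hasDerivAt_of_tendsto_atBot
    (F := fun v ↦ ∫ x, Φ (c * x + v) ∂gaussianReal 0 1) (G := fun v ↦ Φ (v / s))
    (f := fun v ↦ φ (v / s) / s)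
    (fun v ↦ ?_) (fun v ↦ ?_) ?_ ?_) d
  · have h := hasDerivAt_integral_comp_add (μ := gaussianReal 0 1) (measurable_const_mul c)
      hasDerivAt_stdGaussianCDF abs_stdGaussianCDF_le_one abs_gaussianPDFReal_zero_one_le v
    have hφ := integral_mul_gaussianPDFReal_mul_add (fun _ ↦ 1) c v
    simp only [one_mul, integral_const, probReal_univ, smul_eq_mul, mul_one] at hφ
    rwa [hφ] at h
  · simpa [Function.comp_def, div_eq_inv_mul, mul_comm] using
      (hasDerivAt_stdGaussianCDF (v / s)).comp v ((hasDerivAt_id v).div_const s)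
  · exact tendsto_integral_comp_add_atBot (measurable_const_mul c)
      continuous_stdGaussianCDF.measurable abs_stdGaussianCDF_le_one tendsto_stdGaussianCDF_atBot
  · exact tendsto_stdGaussianCDF_atBot.comp (tendsto_id.atBot_div_const hs)

lemma hasDerivAt_owenT_integral (b h : ℝ) :
    HasDerivAt (fun h ↦ ∫ x in (0 : ℝ)..b, exp (-h ^ 2 * (1 + x ^ 2) / 2) / (x ^ 2 + 1))
      (∫ x in (0 : ℝ)..b, -h * exp (-h ^ 2 * (1 + x ^ 2) / 2)) h := by
  have hcont : ∀ v : ℝ,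
      Continuous fun x : ℝ ↦ exp (-v ^ 2 * (1 + x ^ 2) / 2) / (x ^ 2 + 1) :=
    fun v ↦ by fun_prop (disch := intro x; positivity)
  refine (intervalIntegral.hasDerivAt_integral_of_dominated_loc_of_deriv_le
    (F' := fun v x ↦ -v * exp (-v ^ 2 * (1 + x ^ 2) / 2)) (bound := fun _ ↦ |h| + 1)
    (Metric.ball_mem_nhds h one_pos)
    (Eventually.of_forall fun v ↦ (hcont v).aestronglyMeasurable)
    ((hcont h).intervalIntegrable _ _) (by fun_prop : Continuous _).aestronglyMeasurable
    (ae_of_all _ fun x _ v hv ↦ ?_) intervalIntegrable_const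
    (ae_of_all _ fun x _ v _ ↦ ?_)).2
  · have hv' : |v| ≤ |h| + 1 := by
      have := abs_sub_abs_le_abs_sub v h
      rw [Metric.mem_ball, Real.dist_eq] at hv
      linarith
    rw [norm_mul, norm_neg, Real.norm_eq_abs, Real.norm_of_nonneg (exp_nonneg _)]
    exact (mul_le_of_le_one_right (abs_nonneg v)
      (exp_le_one_iff.2 (by nlinarith [sq_nonneg v, sq_nonneg x]))).trans hv'
  · have hinner : HasDerivAt (fun v : ℝ ↦ -v ^ 2 * (1 + x ^ 2) / 2) (-v * (1 + x ^ 2)) v :=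
      (((hasDerivAt_pow 2 v).fun_neg.mul_const (1 + x ^ 2)).div_const 2).congr_deriv
        (by ring)
    refine (hinner.exp.div_const (x ^ 2 + 1)).congr_deriv ?_
    field_simp
    ring

lemma hasDerivAt_owenT (b h : ℝ) :
    HasDerivAt (fun h ↦ owenT h b) (-φ h * (Φ (h * b) - 1 / 2)) h := by
  have hpoint : ∀ x,
      -h * exp (-h ^ 2 * (1 + x ^ 2) / 2) = -(2 * π) * φ h * (h * φ (h * x)) := by
    intro x
    have hsq : √(2 * π) ^ 2 = 2 * π := sq_sqrt (by positivity)
    have hexp : exp (-h ^ 2 * (1 + x ^ 2) / 2) = exp (-h ^ 2 / 2) * exp (-(h * x) ^ 2 / 2) := by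
      rw [← exp_add]; ring_nf
    simp only [gaussianPDFReal_zero_one, hexp]
    field_simp
    rw [hsq]
    ring
  have hint : ∫ x in (0 : ℝ)..b, -h * exp (-h ^ 2 * (1 + x ^ 2) / 2) =
      -(2 * π) * φ h * (Φ (h * b) - 1 / 2) := by
    simp only [hpoint, intervalIntegral.integral_const_mul,
      intervalIntegral.mul_integral_comp_mul_left, mul_zero,
      ← stdGaussianCDF_sub_stdGaussianCDF, stdGaussianCDF_zero]
  have hderiv := (hasDerivAt_owenT_integral b h).const_mul (1 / (2 * π))
  rw [hint] at hderiv
  exact hderiv.congr_deriv (by field_simp)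

lemma abs_owenT_le (h b : ℝ) : |owenT h b| ≤ exp (-h ^ 2 / 2) * |b| / (2 * π) := by
  have hbound : ∀ x ∈ Set.uIoc 0 b,
      ‖exp (-h ^ 2 * (1 + x ^ 2) / 2) / (x ^ 2 + 1)‖ ≤ exp (-h ^ 2 / 2) := by
    intro x _
    rw [Real.norm_of_nonneg (by positivity)]
    calc exp (-h ^ 2 * (1 + x ^ 2) / 2) / (x ^ 2 + 1) ≤ exp (-h ^ 2 * (1 + x ^ 2) / 2) :=
          div_le_self (exp_nonneg _) (by nlinarith [sq_nonneg x])
      _ ≤ exp (-h ^ 2 / 2) := exp_le_exp.2 (by nlinarith [sq_nonneg h, sq_nonneg x])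
  have hint := intervalIntegral.norm_integral_le_of_norm_le_const hbound
  rw [sub_zero, Real.norm_eq_abs] at hint
  rw [owenT, abs_mul, abs_of_pos (by positivity), one_div, inv_mul_eq_div]
  gcongr

lemma tendsto_owenT_atBot (b : ℝ) : Tendsto (fun h ↦ owenT h b) atBot (𝓝 0) := by
  have hexp : Tendsto (fun h : ℝ ↦ exp (-h ^ 2 / 2)) atBot (𝓝 0) := by
    have := ((tendsto_pow_atTop two_ne_zero).comp tendsto_neg_atBot_atTop).atTop_div_const
      (zero_lt_two (α := ℝ))
    simpa [Function.comp_def, neg_div] using tendsto_exp_neg_atTop_nhds_zero.comp this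
  refine squeeze_zero_norm (fun h ↦ (Real.norm_eq_abs _).trans_le (abs_owenT_le h b)) ?_
  simpa using (hexp.mul_const |b|).div_const (2 * π)

lemma integral_stdGaussianCDF_add_mul_gaussianPDFReal_add (v : ℝ) :
    ∫ x, Φ (x + v) * φ (x + v) ∂gaussianReal 0 1 = φ (v / √2) / √2 * Φ (v / √6) := by
  have h2 : √2 ^ 2 = 2 := sq_sqrt zero_le_two
  have h6 : √6 = √2 * √3 := by rw [← sqrt_mul zero_le_two]; norm_num
  have harg : ∀ x, (x - v / √2) / √2 + v = 1 / √2 * x + v / 2 := fun x ↦ by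
    field_simp
    linear_combination v * h2
  have hscale : v / 2 / √(1 + (1 / √2) ^ 2) = v / √6 := by
    rw [div_pow, h2, show (1 : ℝ) + 1 ^ 2 / 2 = 3 / 2 by norm_num, sqrt_div' _ zero_le_two, h6]
    field_simp
    rw [h2]
  have h := integral_mul_gaussianPDFReal_mul_add (fun x ↦ Φ (x + v)) 1 v
  simp only [one_mul, one_pow, show (1 : ℝ) + 1 = 2 by norm_num] at h
  rw [h]
  simp only [harg, integral_stdGaussianCDF_mul_add, hscale]

lemma integral_stdGaussianCDF_add_sq (a : ℝ) :
    ∫ x, Φ (x + a) ^ 2 ∂gaussianReal 0 1 =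
      Φ (a / √2) - 2 * owenT (a / √2) (1 / √3) := by
  have h6 : √6 = √2 * √3 := by rw [← sqrt_mul zero_le_two]; norm_num
  have hΦsq : ∀ y, HasDerivAt (fun y ↦ Φ y ^ 2) (2 * (Φ y * φ y)) y := fun y ↦ by
    simpa [mul_assoc] using (hasDerivAt_stdGaussianCDF y).fun_pow 2
  have hΦsq_le : ∀ y, |Φ y ^ 2| ≤ 1 := fun y ↦ by
    rw [abs_pow]; exact pow_le_one₀ (abs_nonneg _) (abs_stdGaussianCDF_le_one y)
  have hΦsq_deriv_le : ∀ y, |2 * (Φ y * φ y)| ≤ 2 * (√(2 * π))⁻¹ := fun y ↦ by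
    rw [abs_mul, abs_two, abs_mul]
    gcongr
    exact (mul_le_of_le_one_left (abs_nonneg _) (abs_stdGaussianCDF_le_one y)).trans
      (abs_gaussianPDFReal_zero_one_le y)
  refine congrFun (eq_of_hasDerivAt_of_tendsto_atBot
    (F := fun v ↦ ∫ x, Φ (x + v) ^ 2 ∂gaussianReal 0 1)
    (G := fun v ↦ Φ (v / √2) - 2 * owenT (v / √2) (1 / √3))
    (f := fun v ↦ 2 * (φ (v / √2) / √2 * Φ (v / √6)))
    (fun v ↦ ?_) (fun v ↦ ?_) ?_ ?_) a
  · have h := hasDerivAt_integral_comp_add (μ := gaussianReal 0 1) measurable_id' hΦsq hΦsq_le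
      hΦsq_deriv_le v
    rwa [integral_const_mul, integral_stdGaussianCDF_add_mul_gaussianPDFReal_add] at h
  · have hdiv := (hasDerivAt_id v).div_const √2
    have hΦ := (hasDerivAt_stdGaussianCDF (v / √2)).comp v hdiv
    have hT := ((hasDerivAt_owenT (1 / √3) (v / √2)).comp v hdiv).const_mul 2
    refine (hΦ.sub hT).congr_deriv ?_
    rw [show v / √2 * (1 / √3) = v / √6 by rw [h6]; field_simp]
    field_simp
    ring
  · exact tendsto_integral_comp_add_atBot (G := fun y ↦ Φ y ^ 2) measurable_id'
      (continuous_stdGaussianCDF.pow 2).measurable hΦsq_le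
      (by simpa using tendsto_stdGaussianCDF_atBot.pow 2)
  · have hdiv := tendsto_id.atBot_div_const (r := √2) (by positivity)
    simpa using (tendsto_stdGaussianCDF_atBot.comp hdiv).sub
      (((tendsto_owenT_atBot (1 / √3)).comp hdiv).const_mul 2)

/-- For `Z ~ N(0,1)` and any `a ∈ ℝ`,
`Var(Φ(Z + a)) = Φ(a/√2) - Φ(a/√2)² - 2T(a/√2, 1/√3)`. -/
theorem variance_stdGaussianCDF_add (a : ℝ) :
    variance (fun x => stdGaussianCDF (x + a)) (gaussianReal 0 1) =
      stdGaussianCDF (a / Real.sqrt 2) - stdGaussianCDF (a / Real.sqrt 2) ^ 2 -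
        2 * owenT (a / Real.sqrt 2) (1 / Real.sqrt 3) := by
  have hmem : MemLp (fun x ↦ Φ (x + a)) 2 (gaussianReal 0 1) :=
    memLp_of_bounded (a := 0) (b := 1)
      (ae_of_all _ fun x ↦ ⟨stdGaussianCDF_nonneg _, stdGaussianCDF_le_one _⟩)
      (continuous_stdGaussianCDF.comp (continuous_add_const a)).aestronglyMeasurable 2
  have hmean : ∫ x, Φ (x + a) ∂gaussianReal 0 1 = Φ (a / √2) := by
    simpa [one_add_one_eq_two] using integral_stdGaussianCDF_mul_add 1 a
  rw [variance_eq_sub hmem, hmean]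
  simp only [Pi.pow_apply, integral_stdGaussianCDF_add_sq]
  ring
end
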